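/- Let n be a positive integer, let a_1, …, a_n be distinct positive integers, and let M be a set of n − 1 positive integers such that a_1 + ⋯ + a_n ∉ M. Then there exists a permutation σ of {1, …, n} such that for every k with 1 ≤ k ≤ n, the partial sum a_{σ(1)} + ⋯ + a_{σ(k)} does not belong to M. -/

import Mathlib

/-!
Induction on the number of jumps: insert the largest jump `d` into an order of the other jumps
`B`, whose sum is `T`. If `T ∉ M`, order `B` so as to avoid `M` minus its largest point `m`.
Should this order land on `m`, jump `d` just before that landing, which carries the grasshopper
past all of `M`; otherwise jump `d` last. If `T ∈ M`, order `B` so as to avoid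
`M' = {t ∈ M | t < T} ∪ {T - x | x ∈ B, T - x + d ∈ M}`, which is smaller than `B` because
`x ↦ T - x + d` injects the second part into the points of `M` above `T`. Then jump `d` just
before the last jump `y` of `B`: the landing point `T - y + d` is safe because `T - y` was.
-/

open Finset

theorem Finset.card_filter_lt_add_card_filter_gt_lt {α : Type*} [LinearOrder α]
    {s : Finset α} {a : α} (ha : a ∈ s) :
    #(s.filter (· < a)) + #(s.filter (a < ·)) < #s := by
  rw [← card_union_of_disjoint (disjoint_filter.2 fun _ _ h₁ h₂ => lt_asymm h₁ h₂)]
  refine card_lt_card ⟨union_subset (filter_subset _ _) (filter_subset _ _), fun h => ?_⟩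
  simpa using h ha

theorem Fin.sum_Iic_eq_sum_take_ofFn {β : Type*} [AddCommMonoid β] {n : ℕ} (f : Fin n → β)
    (k : Fin n) : ∑ j ∈ Iic k, f j = ((List.ofFn f).take (k + 1)).sum := by
  rw [List.sum_take_ofFn]
  refine sum_congr (Finset.ext fun j => ?_) fun _ _ => rfl
  simp only [mem_Iic, mem_filter, mem_univ, true_and, Fin.le_def]
  omega

theorem List.Perm.exists_perm_ofFn_comp_eq {α : Type*} {n : ℕ} {f : Fin n → α} {l : List α}
    (hl : l.Perm (List.ofFn f)) (hf : Function.Injective f) :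
    ∃ σ : Equiv.Perm (Fin n), List.ofFn (f ∘ σ) = l := by
  obtain rfl : l.length = n := by simpa using hl.length_eq
  have hmem : ∀ j, ∃ i, f i = l.get j := fun j => by
    simpa using hl.subset (l.get_mem j)
  choose σ hσ using hmem
  have hnd : l.Nodup := hl.nodup_iff.2 (List.nodup_ofFn.2 hf)
  have hσ_inj : Function.Injective σ := fun i j hij =>
    hnd.get_inj_iff.1 (by rw [← hσ, ← hσ, hij])
  exact ⟨Equiv.ofBijective σ hσ_inj.bijective_of_finite, by
    simp [Function.comp_def, hσ]⟩

namespace Grasshopper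

def Avoids (M : Finset ℕ) : ℕ → List ℕ → Prop
  | _, [] => True
  | p, x :: l => p + x ∉ M ∧ Avoids M (p + x) l

variable {M M' : Finset ℕ} {p : ℕ} {l : List ℕ}

theorem avoids_append {u v : List ℕ} :
    Avoids M p (u ++ v) ↔ Avoids M p u ∧ Avoids M (p + u.sum) v := by
  induction u generalizing p with
  | nil => simp [Avoids]
  | cons x u ih => simp [Avoids, ih, and_assoc, add_assoc]

theorem avoids_of_forall_lt (h : ∀ t ∈ M, t < p) : Avoids M p l := by
  induction l generalizing p with
  | nil => trivial
  | cons x l ih =>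
    exact ⟨fun hx => (h _ hx).not_ge (Nat.le_add_right p x),
      ih fun t ht => (h t ht).trans_le (Nat.le_add_right p x)⟩

theorem Avoids.of_le_sum (hl : Avoids M' p l) (hM : ∀ t ∈ M, t ≤ p + l.sum → t ∈ M') :
    Avoids M p l := by
  induction l generalizing p with
  | nil => trivial
  | cons x l ih =>
    simp only [List.sum_cons] at hM
    exact ⟨fun hx => hl.1 (hM _ hx (by omega)),
      ih hl.2 fun t ht hle => hM t ht (by omega)⟩

theorem Avoids.add_sum_notMem (hl : Avoids M p l) (hne : l ≠ []) : p + l.sum ∉ M := by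
  induction l generalizing p with
  | nil => exact absurd rfl hne
  | cons x l ih =>
    rcases eq_or_ne l [] with rfl | hl'
    · simpa using hl.1
    · simpa [add_assoc] using ih hl.2 hl'

theorem Avoids.add_sum_take_notMem (hl : Avoids M p l) {k : ℕ} (hk : k < l.length) :
    p + (l.take (k + 1)).sum ∉ M := by
  rw [← List.take_append_drop (k + 1) l, avoids_append] at hl
  exact hl.1.add_sum_notMem (List.ne_nil_of_length_pos (by simp; omega))

theorem Avoids.or_exists_hit_of_erase {m : ℕ} (hl : Avoids (M.erase m) p l) :
    Avoids M p l ∨ ∃ u y w, l = u ++ y :: w ∧ Avoids M p u ∧ p + u.sum + y = m := by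
  induction l generalizing p with
  | nil => exact .inl trivial
  | cons x l ih =>
    by_cases hx : p + x = m
    · exact .inr ⟨[], x, l, rfl, trivial, by simpa using hx⟩
    have hxM : p + x ∉ M := fun h => hl.1 (mem_erase.2 ⟨hx, h⟩)
    rcases ih hl.2 with h | ⟨u, y, w, rfl, hu, hy⟩
    · exact .inl ⟨hxM, h⟩
    · exact .inr ⟨x :: u, y, w, rfl, ⟨hxM, hu⟩, by simpa [add_assoc] using hy⟩

theorem exists_perm_cons_avoids_of_avoids_erase {d m : ℕ} {b : List ℕ}
    (hbd : ∀ x ∈ b, x < d) (hm : ∀ t ∈ M, t ≤ m) (hS : b.sum + d ∉ M)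
    (hb : Avoids (M.erase m) 0 b) : ∃ l, l.Perm (d :: b) ∧ Avoids M 0 l := by
  rcases hb.or_exists_hit_of_erase with hb | ⟨u, y, w, rfl, hu, hy⟩
  · exact ⟨b ++ [d], List.perm_append_singleton d b,
      avoids_append.2 ⟨hb, by simpa [Avoids] using hS⟩⟩
  · have hlt : ∀ t ∈ M, t < 0 + u.sum + d := fun t ht => by
      have := hm t ht; have := hbd y (by simp); omega
    exact ⟨u ++ d :: y :: w, List.perm_middle,
      avoids_append.2 ⟨hu, fun h => (hlt _ h).false, avoids_of_forall_lt hlt⟩⟩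

theorem exists_perm_cons_avoids_of_sum_mem {d : ℕ} {b : List ℕ}
    (hb : ∀ x ∈ b, 0 < x ∧ x < d) (hcard : #M ≤ b.length) (hT : b.sum ∈ M)
    (hS : b.sum + d ∉ M)
    (hlow : ∀ t ∈ M, t < b.sum → t ∈ M')
    (hpair : ∀ y ∈ b, b.sum - y + d ∈ M → b.sum - y ∈ M')
    (hbM' : Avoids M' 0 b) : ∃ l, l.Perm (d :: b) ∧ Avoids M 0 l := by
  obtain rfl | ⟨q, y, rfl⟩ := b.eq_nil_or_concat
  · simp_all
  simp only [List.concat_eq_append, List.sum_append, List.sum_singleton, List.mem_append,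
    List.mem_singleton] at *
  obtain ⟨hy, hyd⟩ := hb y (.inr rfl)
  have hq := (avoids_append.1 hbM').1
  refine ⟨q ++ [d, y], List.perm_middle, avoids_append.2 ⟨hq.of_le_sum fun t ht hle =>
    hlow t ht (by omega), fun hqd => ?_, by simpa [add_right_comm] using hS, trivial⟩⟩
  have hqM' : q.sum ∈ M' := by simpa using hpair y (.inr rfl) (by simpa using hqd)
  rcases eq_or_ne q [] with rfl | hq'
  · have : d = y :=
      card_le_one.1 (by simpa using hcard) d (by simpa using hqd) y (by simpa using hT)
    omega
  · exact hq.add_sum_notMem hq' (by simpa using hqM')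

theorem exists_perm_cons_toList_avoids_of_sum_mem {B : Finset ℕ} {d : ℕ}
    (hB : ∀ x ∈ B, 0 < x ∧ x < d) (hcard : #M ≤ #B) (hT : ∑ x ∈ B, x ∈ M)
    (hS : (∑ x ∈ B, x) + d ∉ M)
    (IH : ∀ M' : Finset ℕ, #M' < #B → ∑ x ∈ B, x ∉ M' →
      ∃ b, b.Perm B.toList ∧ Avoids M' 0 b) :
    ∃ l, l.Perm (d :: B.toList) ∧ Avoids M 0 l := by
  set T := ∑ x ∈ B, x
  have hxT : ∀ x ∈ B, x ≤ T := fun x hx =>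
    single_le_sum (f := fun x => x) (fun _ _ => Nat.zero_le _) hx
  set D := B.filter fun x => T - x + d ∈ M
  set M' := M.filter (· < T) ∪ D.image (T - ·)
  have hD : #D ≤ #(M.filter (T < ·)) := by
    refine card_le_card_of_injOn (fun x => T - x + d) (fun x hx => ?_) (fun x hx y hy hxy => ?_)
    · rw [mem_coe, mem_filter] at hx
      have := hB x hx.1; have := hxT x hx.1
      rw [mem_coe, mem_filter]
      exact ⟨hx.2, show T < T - x + d by omega⟩
    · rw [mem_coe, mem_filter] at hx hy
      have := hxT x hx.1; have := hxT y hy.1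
      simp only at hxy
      omega
  have hM' : #M' < #B := (card_union_le _ _).trans_lt <| by
    have := card_filter_lt_add_card_filter_gt_lt hT
    have := card_image_le (s := D) (f := (T - ·))
    omega
  have hTM' : T ∉ M' := by
    simp only [M', D, mem_union, mem_filter, lt_irrefl, and_false, mem_image, false_or, not_exists,
      not_and]
    intro x hx hTx
    have := hB x hx.1; have := hxT x hx.1
    omega
  obtain ⟨b, hb, hbM'⟩ := IH M' hM' hTM'
  have hbB : ∀ {x}, x ∈ b → x ∈ B := by simp [hb.mem_iff]
  have hbT : b.sum = T := by rw [hb.sum_eq, sum_toList]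
  obtain ⟨l, hl, hlM⟩ := exists_perm_cons_avoids_of_sum_mem (M' := M')
    (fun x hx => hB x (hbB hx))
    (by rwa [hb.length_eq, length_toList]) (hbT ▸ hT) (hbT ▸ hS)
    (fun t ht htT => mem_union_left _ (mem_filter.2 ⟨ht, hbT ▸ htT⟩))
    (fun y hy hyM =>
      mem_union_right _ (mem_image.2 ⟨y, mem_filter.2 ⟨hbB hy, hbT ▸ hyM⟩, hbT ▸ rfl⟩))
    hbM'
  exact ⟨l, hl.trans (hb.cons d), hlM⟩

theorem exists_perm_toList_avoids (A M : Finset ℕ) (hpos : ∀ x ∈ A, 0 < x) (hcard : #M < #A)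
    (hS : ∑ x ∈ A, x ∉ M) : ∃ l, l.Perm A.toList ∧ Avoids M 0 l := by
  induction A using Finset.strongInduction generalizing M with
  | H A IH =>
  obtain rfl | hM := M.eq_empty_or_nonempty
  · exact ⟨A.toList, .refl _, avoids_of_forall_lt (by simp)⟩
  have hA : A.Nonempty := card_pos.1 (by omega)
  set d := A.max' hA
  have hdA : d ∈ A := A.max'_mem hA
  set B := A.erase d
  have hB : ∀ x ∈ B, 0 < x ∧ x < d := fun x hx =>
    ⟨hpos x (mem_of_mem_erase hx), A.lt_max'_of_mem_erase_max' hA hx⟩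
  have hBA : #B + 1 = #A := card_erase_add_one hdA
  have hS' : (∑ x ∈ B, x) + d ∉ M := by rwa [sum_erase_add _ _ hdA]
  have IHB : ∀ M' : Finset ℕ, #M' < #B → ∑ x ∈ B, x ∉ M' →
      ∃ b, b.Perm B.toList ∧ Avoids M' 0 b :=
    fun M' => IH B (erase_ssubset hdA) M' fun x hx => (hB x hx).1
  suffices ∃ l, l.Perm (d :: B.toList) ∧ Avoids M 0 l by
    obtain ⟨l, hl, hlM⟩ := this
    exact ⟨l, hl.trans ((insert_erase hdA ▸ toList_insert (notMem_erase d A)).symm), hlM⟩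
  by_cases hT : ∑ x ∈ B, x ∈ M
  · exact exists_perm_cons_toList_avoids_of_sum_mem hB (by omega) hT hS' IHB
  set m := M.max' hM
  have hm : #(M.erase m) < #B := by
    rw [card_erase_of_mem (M.max'_mem hM)]
    have := hM.card_pos
    omega
  obtain ⟨b, hb, hbM⟩ := IHB (M.erase m) hm fun h => hT (mem_of_mem_erase h)
  obtain ⟨l, hl, hlM⟩ := exists_perm_cons_avoids_of_avoids_erase
    (fun x hx => (hB x (by simpa using hb.subset hx)).2) (fun t => M.le_max' t)
    (by rwa [hb.sum_eq, sum_toList]) hbM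
  exact ⟨l, hl.trans (hb.cons d), hlM⟩

end Grasshopper

theorem grasshopper_imo2009_p6_general (n : ℕ) (hn : 0 < n) (a : Fin n → ℕ)
    (ha_pos : ∀ i, 0 < a i) (ha_inj : Function.Injective a)
    (M : Finset ℕ) (hM_card : M.card = n - 1)
    (hS : (∑ i, a i) ∉ M) :
    ∃ σ : Equiv.Perm (Fin n), ∀ k : Fin n, (∑ j ∈ Finset.Iic k, a (σ j)) ∉ M := by
  obtain ⟨l, hl, hlM⟩ := Grasshopper.exists_perm_toList_avoids (univ.image a) M
    (by simpa using ha_pos) (by rw [card_image_of_injective _ ha_inj]; simp; omega)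
    (by rwa [sum_image ha_inj.injOn])
  have hA : (univ.image a).toList.Perm (List.ofFn a) :=
    (List.perm_ext_iff_of_nodup (nodup_toList _) (List.nodup_ofFn.2 ha_inj)).2 (by simp)
  obtain ⟨σ, rfl⟩ := (hl.trans hA).exists_perm_ofFn_comp_eq ha_inj
  refine ⟨σ, fun k => ?_⟩
  have hk := hlM.add_sum_take_notMem (k := k) (by simp)
  rwa [zero_add, ← Fin.sum_Iic_eq_sum_take_ofFn] at hk

/-- The Grasshopper problem (IMO 2009 Problem 6): given `n` distinct positive
integers `a i` and a set `M` of `n - 1` positive integers not containing the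
total sum, some ordering of the jumps avoids all points of `M` at every
partial sum. -/
theorem grasshopper_imo2009_p6 (n : ℕ) (hn : 0 < n) (a : Fin n → ℕ)
    (ha_pos : ∀ i, 0 < a i) (ha_inj : Function.Injective a)
    (M : Finset ℕ) (hM_card : M.card = n - 1) (hM_pos : ∀ m ∈ M, 0 < m)
    (hS : (∑ i, a i) ∉ M) :
    ∃ σ : Equiv.Perm (Fin n), ∀ k : Fin n, (∑ j ∈ Finset.Iic k, a (σ j)) ∉ M :=
  grasshopper_imo2009_p6_general n hn a ha_pos ha_inj M hM_card hS
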